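/- arXiv:2403.18800 — 2 statements merged into one kernel-verified Lean document; each statement's English description precedes it below -/
import Mathlib

section
/- If G is bipartite, then F_k(G) is bipartite for every k with 1≤k≤|V(G)|-1. -/
open Finset

/-- The `k`-token graph of `G`: vertices are the `k`-subsets of `V`, two being adjacent
iff their symmetric difference is a pair `{a,b}` with `a ∈ A`, `b ∈ B`, `G.Adj a b`. -/
def tokenGraph {V : Type*} [DecidableEq V] (G : SimpleGraph V) (k : ℕ) :
    SimpleGraph {s : Finset V // s.card = k} where
  Adj A B := ∃ a b, a ∈ A.1 ∧ b ∈ B.1 ∧ G.Adj a b ∧ symmDiff A.1 B.1 = {a, b}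
  symm := by
    constructor
    rintro A B ⟨a, b, ha, hb, hab, hd⟩
    exact ⟨b, a, hb, ha, hab.symm, by rw [symmDiff_comm, hd, Finset.pair_comm]⟩
  loopless := by
    constructor
    rintro A ⟨a, b, ha, hb, hab, hd⟩
    rw [symmDiff_self] at hd
    exact (Finset.insert_ne_empty a {b}) hd.symm

noncomputable instance tokenGraph.instDecidableRelAdj {V : Type*} [DecidableEq V]
    (G : SimpleGraph V) (k : ℕ) : DecidableRel (tokenGraph G k).Adj :=
  Classical.decRel _

/-- The `(n,k)`-binomial matrix: rows are characteristic vectors of the `k`-subsets. -/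
def binMatrix (V : Type*) [DecidableEq V] (k : ℕ) :
    Matrix {s : Finset V // s.card = k} V ℝ :=
  fun A j => if j ∈ A.1 then 1 else 0

/-!
Take a proper colouring `c` of `G` by an abelian group (`ℤ/2` for bipartite `G`) and colour a
`k`-set by the sum of the colours of its elements. Adjacent `k`-sets differ by exchanging the two
ends `a, b` of an edge, so their colours differ by `c a - c b ≠ 0`.
-/

namespace Finset

variable {α : Type*} [DecidableEq α]

theorem sdiff_eq_singleton_of_symmDiff_eq_pair {s t : Finset α} {a b : α} (ha : a ∈ s)
    (hb : b ∈ t) (h : symmDiff s t = {a, b}) : s \ t = {a} := by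
  ext x
  have hx := congrArg (x ∈ ·) h
  have ha' := congrArg (a ∈ ·) h
  have hb' := congrArg (b ∈ ·) h
  simp only [mem_symmDiff, mem_insert, mem_singleton, eq_iff_iff] at hx ha' hb'
  simp only [mem_sdiff, mem_singleton]
  grind

theorem sum_sub_sum_of_symmDiff_eq_pair {β : Type*} [AddCommGroup β] (f : α → β)
    {s t : Finset α} {a b : α} (ha : a ∈ s) (hb : b ∈ t) (h : symmDiff s t = {a, b}) :
    ∑ x ∈ s, f x - ∑ x ∈ t, f x = f a - f b := by
  rw [← sum_sdiff_sub_sum_sdiff, sdiff_eq_singleton_of_symmDiff_eq_pair ha hb h,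
    sdiff_eq_singleton_of_symmDiff_eq_pair hb ha (by rw [symmDiff_comm, h, pair_comm]),
    sum_singleton, sum_singleton]

end Finset

namespace SimpleGraph

variable {V : Type*} [DecidableEq V] {G : SimpleGraph V}

def Coloring.tokenSum {β : Type*} [AddCommGroup β] (c : G.Coloring β) (k : ℕ) :
    (tokenGraph G k).Coloring β :=
  Coloring.mk (fun A => ∑ x ∈ A.1, c x) <| by
    rintro A B ⟨a, b, ha, hb, hab, hAB⟩ hsum
    apply c.valid hab
    rw [← sub_eq_zero, ← Finset.sum_sub_sum_of_symmDiff_eq_pair c ha hb hAB, hsum, sub_self]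

theorem Colorable.tokenGraph {n : ℕ} [NeZero n] (hG : G.Colorable n) (k : ℕ) :
    (tokenGraph G k).Colorable n := by
  obtain ⟨c⟩ := hG
  simpa using (c.tokenSum k).colorable

end SimpleGraph

theorem tokenGraph_bipartite {V : Type*} [Fintype V] [DecidableEq V]
    (G : SimpleGraph V) (hG : G.Colorable 2) :
    ∀ k, 1 ≤ k → k ≤ Fintype.card V - 1 → (tokenGraph G k).Colorable 2 :=
  fun k _ _ => hG.tokenGraph k
end

section
/- For any graph G on n vertices with Laplacian matrix L₁, and its k-token graph F_k(G) with Laplacian L_k, one has B·L₁ = L_k·B, where B is the (n,k)-binomial matrix. -/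
open Finset

/-!
Test both sides against a vector `x`. On the left, `(B L x) A = ∑_{a ∈ A} (L x) a` is the sum of
`x a - x b` over the ordered adjacent pairs `(a, b)` with `a ∈ A`; the pairs inside `A` cancel,
leaving those with `b ∉ A`. The token-graph neighbours of `A` are exactly the sets `C = A - a + b`
for these pairs, and `(B x) A - (B x) C = x a - x b`, so `(L_k B x) A` is the same sum.
-/

namespace Finset

variable {α : Type*} [DecidableEq α]

theorem symmDiff_eq_pair_iff {s t : Finset α} {a b : α} (ha : a ∈ s) (hb : b ∈ t) :
    symmDiff s t = {a, b} ↔ b ∉ s ∧ t = insert b (s.erase a) := by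
  simp only [Finset.ext_iff, mem_symmDiff, mem_insert, mem_singleton, mem_erase]
  grind

theorem card_insert_erase {s : Finset α} {a b : α} (ha : a ∈ s) (hb : b ∉ s) :
    (insert b (s.erase a)).card = s.card := by
  rw [card_insert_of_notMem (fun h => hb (mem_of_mem_erase h)), card_erase_add_one ha]

theorem sum_insert_erase {M : Type*} [AddCommGroup M] {s : Finset α} {a b : α} (ha : a ∈ s)
    (hb : b ∉ s) (f : α → M) :
    ∑ x ∈ insert b (s.erase a), f x = f b + (∑ x ∈ s, f x - f a) := by
  rw [sum_insert (fun h => hb (mem_of_mem_erase h)), sum_erase_eq_sub ha]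

theorem injOn_insert_erase [Fintype α] (s : Finset α) :
    Set.InjOn (fun p : α × α => insert p.2 (s.erase p.1)) ↑(s ×ˢ sᶜ) := by
  rintro ⟨a, b⟩ hab ⟨a', b'⟩ hab' h
  simp only [coe_product, coe_compl, Set.mem_prod, mem_coe, Set.mem_compl_iff, Finset.ext_iff,
    mem_insert, mem_erase] at hab hab' h
  ext <;> grind

end Finset

open Matrix

namespace SimpleGraph

variable {V : Type*} (G : SimpleGraph V) [DecidableRel G.Adj]

theorem sum_sum_ite_adj_sub_eq_zero {M : Type*} [AddCommGroup M] (s : Finset V) (x : V → M) :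
    ∑ a ∈ s, ∑ b ∈ s, (if G.Adj a b then x a - x b else 0) = 0 := by
  have hswap : ∑ a ∈ s, ∑ b ∈ s, (if G.Adj a b then x b else 0)
      = ∑ a ∈ s, ∑ b ∈ s, (if G.Adj a b then x a else 0) := by
    rw [sum_comm]
    exact sum_congr rfl fun a _ => sum_congr rfl fun b _ => if_congr (G.adj_comm b a) rfl rfl
  calc ∑ a ∈ s, ∑ b ∈ s, (if G.Adj a b then x a - x b else 0)
      = ∑ a ∈ s, ∑ b ∈ s, (if G.Adj a b then x a else 0)
        - ∑ a ∈ s, ∑ b ∈ s, (if G.Adj a b then x b else 0) := by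
        simp only [← sum_sub_distrib, ite_sub_ite, sub_zero]
    _ = 0 := by rw [hswap, sub_self]

variable {R : Type*} [Fintype V] [DecidableEq V] [NonAssocRing R]

theorem lapMatrix_mulVec_apply_eq_sum_ite (x : V → R) (v : V) :
    (G.lapMatrix R *ᵥ x) v = ∑ w, if G.Adj v w then x v - x w else 0 := by
  rw [lapMatrix_mulVec_apply, ← sum_filter, ← neighborFinset_eq_filter, sum_sub_distrib, sum_const,
    card_neighborFinset_eq_degree, nsmul_eq_mul]

theorem sum_lapMatrix_mulVec_apply (s : Finset V) (x : V → R) :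
    ∑ v ∈ s, (G.lapMatrix R *ᵥ x) v = ∑ a ∈ s, ∑ b ∈ sᶜ, if G.Adj a b then x a - x b else 0 := by
  simp only [lapMatrix_mulVec_apply_eq_sum_ite, ← sum_add_sum_compl s, sum_add_distrib,
    sum_sum_ite_adj_sub_eq_zero, zero_add]

end SimpleGraph

section TokenGraph

variable {V : Type*} [DecidableEq V] {G : SimpleGraph V} {k : ℕ}

theorem tokenGraph_adj_iff {A C : {s : Finset V // s.card = k}} :
    (tokenGraph G k).Adj A C ↔ ∃ a ∈ A.1, ∃ b ∉ A.1, G.Adj a b ∧ C.1 = insert b (A.1.erase a) := by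
  constructor
  · rintro ⟨a, b, ha, hb, hab, hd⟩
    obtain ⟨hbA, hC⟩ := (symmDiff_eq_pair_iff ha hb).1 hd
    exact ⟨a, ha, b, hbA, hab, hC⟩
  · rintro ⟨a, ha, b, hb, hab, hC⟩
    have hbC : b ∈ C.1 := hC ▸ mem_insert_self b _
    exact ⟨a, b, ha, hbC, hab, (symmDiff_eq_pair_iff ha hbC).2 ⟨hb, hC⟩⟩

theorem sum_tokenGraph_adj [Fintype V] [DecidableRel G.Adj] {M : Type*} [AddCommMonoid M]
    (A : {s : Finset V // s.card = k}) (g : Finset V → M) :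
    ∑ C, (if (tokenGraph G k).Adj A C then g C.1 else 0)
      = ∑ a ∈ A.1, ∑ b ∈ A.1ᶜ, if G.Adj a b then g (insert b (A.1.erase a)) else 0 := by
  rw [← sum_filter, ← sum_product', ← sum_filter]
  symm
  refine sum_bij (fun p hp => ⟨insert p.2 (A.1.erase p.1), ?_⟩) ?_ ?_ ?_ fun _ _ => rfl
  · obtain ⟨ha, hb⟩ := mem_product.1 (mem_filter.1 hp).1
    rw [card_insert_erase ha (mem_compl.1 hb), A.2]
  · intro p hp
    obtain ⟨hab, hadj⟩ := mem_filter.1 hp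
    obtain ⟨ha, hb⟩ := mem_product.1 hab
    exact mem_filter.2 ⟨mem_univ _, tokenGraph_adj_iff.2 ⟨p.1, ha, p.2, mem_compl.1 hb, hadj, rfl⟩⟩
  · intro p hp q hq hpq
    exact injOn_insert_erase A.1 (mem_coe.2 (mem_filter.1 hp).1) (mem_coe.2 (mem_filter.1 hq).1)
      (congrArg Subtype.val hpq)
  · intro C hC
    obtain ⟨a, ha, b, hb, hab, hC⟩ := tokenGraph_adj_iff.1 (mem_filter.1 hC).2
    exact ⟨(a, b), mem_filter.2 ⟨mem_product.2 ⟨ha, mem_compl.2 hb⟩, hab⟩, Subtype.ext hC.symm⟩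

end TokenGraph

theorem binMatrix_mulVec_apply {V : Type*} [Fintype V] [DecidableEq V] {k : ℕ} (x : V → ℝ)
    (A : {s : Finset V // s.card = k}) : (binMatrix V k *ᵥ x) A = ∑ v ∈ A.1, x v := by
  simp only [mulVec, dotProduct, binMatrix, ite_mul, one_mul, zero_mul, sum_ite_mem, univ_inter]

theorem binMatrix_mul_lap_eq_lap_mul_binMatrix {V : Type*} [Fintype V] [DecidableEq V]
    (G : SimpleGraph V) [DecidableRel G.Adj] (k : ℕ) :
    binMatrix V k * G.lapMatrix ℝ = (tokenGraph G k).lapMatrix ℝ * binMatrix V k := by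
  refine ext_iff_mulVec.2 fun x => funext fun A => ?_
  rw [← mulVec_mulVec, ← mulVec_mulVec, binMatrix_mulVec_apply, G.sum_lapMatrix_mulVec_apply,
    SimpleGraph.lapMatrix_mulVec_apply_eq_sum_ite]
  simp only [binMatrix_mulVec_apply]
  rw [sum_tokenGraph_adj A fun s => ∑ v ∈ A.1, x v - ∑ v ∈ s, x v]
  refine sum_congr rfl fun a ha => sum_congr rfl fun b hb => ?_
  rw [sum_insert_erase ha (mem_compl.1 hb)]
  congr 1
  abel
end
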